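/- arXiv:1612.06625 — 4 statements merged into one kernel-verified Lean document; each statement's English description precedes it below -/
import Mathlib

section
/- Let V be a group whose center Z(V) is 2-divisible, let U be a group and U' an index-2 subgroup of U. Let ψ : U' → V be a homomorphism such that (a) the centralizer in V of the image of ψ equals Z(V), and (b) for some (equivalently, every) μ ∈ U \ U', the homomorphism u ↦ ψ(μ u μ⁻¹) on U' is conjugate in V to ψ. Then ψ extends to a group homomorphism U → V. -/
/-- **Extension lemma** (Dembélé–Loeffler–Pacetti, Lemma on extensions of
homomorphisms): let `V` be a group with 2-divisible centre, `U' ≤ U` a subgroup of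
index 2, and `ψ : U' → V` a homomorphism such that (a) the centraliser in `V` of the
image of `ψ` is exactly `Z(V)` ("big image"), and (b) for some `μ ∈ U \ U'`, the
homomorphism `u ↦ ψ(μ u μ⁻¹)` is conjugate in `V` to `ψ`.  Then `ψ` extends to a
homomorphism `U → V`. -/
theorem extension_lemma {U V : Type*} [Group U] [Group V]
    (U' : Subgroup U) (hindex : U'.index = 2)
    (hdiv : ∀ z ∈ Subgroup.center V, ∃ w ∈ Subgroup.center V, w * w = z)
    (ψ : U' →* V)
    (hbig : ∀ v : V, (∀ u : U', v * ψ u * v⁻¹ = ψ u) ↔ v ∈ Subgroup.center V)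
    (μ : U) (hμ : μ ∉ U')
    (hconj : ∃ v : V, ∀ (u : U') (h : μ * ↑u * μ⁻¹ ∈ U'),
      ψ ⟨μ * ↑u * μ⁻¹, h⟩ = v * ψ u * v⁻¹) :
    ∃ Ψ : U →* V, ∀ u : U', Ψ ↑u = ψ u := by
  classical
  obtain ⟨v, hv⟩ := hconj
  have hmm : ∀ a b : U, a * b ∈ U' ↔ (a ∈ U' ↔ b ∈ U') := fun a b =>
    Subgroup.mul_mem_iff_of_index_two hindex
  have hμi : μ⁻¹ ∉ U' := fun h => hμ (U'.inv_mem_iff.mp h)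
  have hcm : ∀ x : U, x ∈ U' → μ * x * μ⁻¹ ∈ U' := by
    intro x hx; rw [hmm, hmm]; tauto
  have hcm' : ∀ x : U, x ∈ U' → μ⁻¹ * x * μ ∈ U' := by
    intro x hx; rw [hmm, hmm]; tauto
  have hμ2 : μ * μ ∈ U' := Subgroup.mul_self_mem_of_index_two hindex μ
  set m : U' := ⟨μ * μ, hμ2⟩ with hm
  -- key: ψ m conjugates like v * v
  have hkey : ∀ u : U', ψ m * ψ u * (ψ m)⁻¹ = (v * v) * ψ u * (v * v)⁻¹ := by
    intro u
    have h1 : μ * ↑u * μ⁻¹ ∈ U' := hcm u u.2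
    set u1 : U' := ⟨μ * ↑u * μ⁻¹, h1⟩ with hu1
    have h2 : μ * ↑u1 * μ⁻¹ ∈ U' := hcm _ u1.2
    have e : m * u * m⁻¹ = ⟨μ * ↑u1 * μ⁻¹, h2⟩ := by
      ext; simp [hu1, hm]; group
    calc ψ m * ψ u * (ψ m)⁻¹ = ψ (m * u * m⁻¹) := by
          rw [map_mul, map_mul, map_inv]
      _ = ψ ⟨μ * ↑u1 * μ⁻¹, h2⟩ := by rw [e]
      _ = v * ψ u1 * v⁻¹ := hv u1 h2
      _ = v * (v * ψ u * v⁻¹) * v⁻¹ := by rw [hv u h1]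
      _ = (v * v) * ψ u * (v * v)⁻¹ := by simp [mul_assoc]
  -- the centralizing element
  have hc : (v * v)⁻¹ * ψ m ∈ Subgroup.center V := by
    rw [← hbig]
    intro u
    calc (v * v)⁻¹ * ψ m * ψ u * ((v * v)⁻¹ * ψ m)⁻¹ =
        (v * v)⁻¹ * (ψ m * ψ u * (ψ m)⁻¹) * (v * v) := by simp [mul_assoc]
      _ = (v * v)⁻¹ * ((v * v) * ψ u * (v * v)⁻¹) * (v * v) := by rw [hkey u]
      _ = ψ u := by group
  obtain ⟨w, hwc, hww⟩ := hdiv _ hc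
  have hwcomm : ∀ x : V, w * x = x * w := fun x =>
    (Subgroup.mem_center_iff.mp hwc x).symm
  set v' : V := v * w with hv'
  have hv'sq : v' * v' = ψ m := by
    have h1 : v * w * (v * w) = v * v * (w * w) := by
      rw [mul_assoc v w (v * w), ← mul_assoc w v w, hwcomm v]; group
    rw [hv', h1, hww]; group
  -- conjugation by v' agrees with conjugation by v
  have hconjv' : ∀ x : V, v' * x * v'⁻¹ = v * x * v⁻¹ := by
    intro x
    have h1 : w * x * w⁻¹ = x := by rw [hwcomm x]; group
    calc v' * x * v'⁻¹ = v * (w * x * w⁻¹) * v⁻¹ := by rw [hv']; group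
      _ = v * x * v⁻¹ := by rw [h1]
  have hvc : ∀ (x : U) (hx : x ∈ U') (hx2 : μ * x * μ⁻¹ ∈ U'),
      ψ ⟨μ * x * μ⁻¹, hx2⟩ = v' * ψ ⟨x, hx⟩ * v'⁻¹ := by
    intro x hx hx2
    rw [hconjv']; exact hv ⟨x, hx⟩ hx2
  have hvci : ∀ (x : U) (hx : x ∈ U') (hx2 : μ⁻¹ * x * μ ∈ U'),
      ψ ⟨μ⁻¹ * x * μ, hx2⟩ = v'⁻¹ * ψ ⟨x, hx⟩ * v' := by
    intro x hx hx2
    have h3 : μ * (μ⁻¹ * x * μ) * μ⁻¹ ∈ U' := hcm _ hx2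
    have e : (⟨μ * (μ⁻¹ * x * μ) * μ⁻¹, h3⟩ : U') = ⟨x, hx⟩ := by ext; group
    have h4 := hvc _ hx2 h3
    rw [e] at h4
    rw [h4]; group
  -- membership for the "odd" part
  have hodd : ∀ a : U, a ∉ U' → μ⁻¹ * a ∈ U' := by
    intro a ha; rw [hmm]; tauto
  -- define the extension
  refine ⟨{ toFun := fun a => if h : a ∈ U' then ψ ⟨a, h⟩ else v' * ψ ⟨μ⁻¹ * a, hodd a h⟩
            map_one' := ?_
            map_mul' := ?_ }, ?_⟩
  · simp only [dif_pos U'.one_mem]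
    exact map_one ψ
  · intro a b
    by_cases ha : a ∈ U' <;> by_cases hb : b ∈ U'
    · have hab : a * b ∈ U' := U'.mul_mem ha hb
      simp only [dif_pos ha, dif_pos hb, dif_pos hab]
      rw [← map_mul]; rfl
    · have hab : a * b ∉ U' := by rw [hmm]; tauto
      simp only [dif_pos ha, dif_neg hb, dif_neg hab]
      have h1 : μ⁻¹ * a * μ ∈ U' := hcm' a ha
      have e : (⟨μ⁻¹ * (a * b), hodd _ hab⟩ : U') =
          ⟨μ⁻¹ * a * μ, h1⟩ * ⟨μ⁻¹ * b, hodd b hb⟩ := by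
        ext; simp; group
      rw [e, map_mul, hvci a ha h1]
      group
    · have hab : a * b ∉ U' := by rw [hmm]; tauto
      simp only [dif_neg ha, dif_pos hb, dif_neg hab]
      have e : (⟨μ⁻¹ * (a * b), hodd _ hab⟩ : U') =
          ⟨μ⁻¹ * a, hodd a ha⟩ * ⟨b, hb⟩ := by
        ext; simp; group
      rw [e, map_mul]
      group
    · have hab : a * b ∈ U' := by rw [hmm]; tauto
      simp only [dif_neg ha, dif_neg hb, dif_pos hab]
      have h1 : μ⁻¹ * (μ⁻¹ * a) * μ ∈ U' := hcm' _ (hodd a ha)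
      have e : (⟨a * b, hab⟩ : U') =
          m * ⟨μ⁻¹ * (μ⁻¹ * a) * μ, h1⟩ * ⟨μ⁻¹ * b, hodd b hb⟩ := by
        ext; simp [hm]; group
      rw [e, map_mul, map_mul, hvci _ (hodd a ha) h1, ← hv'sq]
      group
  · intro u
    simp only [MonoidHom.coe_mk, OneHom.coe_mk, dif_pos u.2]
end

section
/- Let V be a group with 2-divisible center, U a group, U' an index-2 subgroup, μ ∈ U \ U', and ψ : U' → V a homomorphism with centralizer of its image equal to Z(V). Suppose v ∈ V satisfies v ψ(u) v⁻¹ = ψ(μ u μ⁻¹) for all u ∈ U'. Then there exists z ∈ Z(V) with ψ(μ²) = v² z, and for any square root z̃ ∈ Z(V) of z, the map sending μu ↦ v z̃ ψ(u) (u ∈ U') and u ↦ ψ(u) is a homomorphism U → V extending ψ. -/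
/-- Explicit form of the extension lemma: with `U' ≤ U` of index 2, `μ ∈ U \ U'`,
`ψ : U' → V` with centraliser of its image equal to the (2-divisible) centre `Z(V)`,
and `v ∈ V` with `v ψ(u) v⁻¹ = ψ(μ u μ⁻¹)` for all `u ∈ U'`: there is `z ∈ Z(V)` with
`ψ(μ²) = v² z`, and for any square root `z̃ ∈ Z(V)` of `z`, the map `U → V` sending
`u ↦ ψ(u)` (for `u ∈ U'`) and `μu ↦ v z̃ ψ(u)` is a homomorphism extending `ψ`. -/
theorem extension_lemma_explicit {U V : Type*} [Group U] [Group V]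
    (U' : Subgroup U) (hindex : U'.index = 2)
    (hdiv : ∀ z ∈ Subgroup.center V, ∃ w ∈ Subgroup.center V, w * w = z)
    (ψ : U' →* V)
    (hbig : ∀ w : V, (∀ u : U', w * ψ u * w⁻¹ = ψ u) ↔ w ∈ Subgroup.center V)
    (μ : U) (hμ : μ ∉ U') (v : V)
    (hv : ∀ (u : U') (h : μ * ↑u * μ⁻¹ ∈ U'), v * ψ u * v⁻¹ = ψ ⟨μ * ↑u * μ⁻¹, h⟩) :
    ∃ z ∈ Subgroup.center V,
      (∀ h : μ * μ ∈ U', ψ ⟨μ * μ, h⟩ = v * v * z) ∧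
      ∀ zt ∈ Subgroup.center V, zt * zt = z →
        ∀ Ψ : U → V,
          (∀ u : U', Ψ ↑u = ψ u) →
          (∀ x : U, x ∉ U' → ∀ h : μ⁻¹ * x ∈ U', Ψ x = v * zt * ψ ⟨μ⁻¹ * x, h⟩) →
          ∀ x y : U, Ψ (x * y) = Ψ x * Ψ y := by
  have hmem : ∀ a b : U, a * b ∈ U' ↔ (a ∈ U' ↔ b ∈ U') :=
    fun a b => Subgroup.mul_mem_iff_of_index_two hindex
  have hμinv : μ⁻¹ ∉ U' := fun h => hμ (by simpa using U'.inv_mem h)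
  have hψeq : ∀ (a b : U) (ha : a ∈ U') (hb : b ∈ U'), a = b →
      ψ ⟨a, ha⟩ = ψ ⟨b, hb⟩ := by
    intro a b ha hb h; subst h; rfl
  have hψmul : ∀ (a b : U) (ha : a ∈ U') (hb : b ∈ U'),
      ψ ⟨a * b, mul_mem ha hb⟩ = ψ ⟨a, ha⟩ * ψ ⟨b, hb⟩ :=
    fun a b ha hb => map_mul ψ ⟨a, ha⟩ ⟨b, hb⟩
  have hconjmem : ∀ u : U', μ * ↑u * μ⁻¹ ∈ U' := by
    intro u
    have h1 : μ * ↑u ∉ U' := by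
      rw [hmem]; simp [hμ, u.2]
    rw [hmem]
    exact iff_of_false h1 hμinv
  have hconj : ∀ u : U', v * ψ u = ψ ⟨μ * ↑u * μ⁻¹, hconjmem u⟩ * v := by
    intro u
    have h := hv u (hconjmem u)
    rw [← h]; group
  have hμ2 : μ * μ ∈ U' := Subgroup.mul_self_mem_of_index_two hindex μ
  have hc2mem : ∀ u : U', (μ * μ) * ↑u * (μ * μ)⁻¹ ∈ U' :=
    fun u => mul_mem (mul_mem hμ2 u.2) (U'.inv_mem hμ2)
  have hcc : ∀ u : U', v * v * ψ u = ψ ⟨(μ * μ) * ↑u * (μ * μ)⁻¹, hc2mem u⟩ * (v * v) := by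
    intro u
    have e1 := hconj u
    have e2 := hconj ⟨μ * ↑u * μ⁻¹, hconjmem u⟩
    have e3 : ψ ⟨μ * (μ * ↑u * μ⁻¹) * μ⁻¹, hconjmem ⟨μ * ↑u * μ⁻¹, hconjmem u⟩⟩
        = ψ ⟨(μ * μ) * ↑u * (μ * μ)⁻¹, hc2mem u⟩ := by
      apply hψeq; group
    calc v * v * ψ u = v * (v * ψ u) := by group
      _ = v * (ψ ⟨μ * ↑u * μ⁻¹, hconjmem u⟩ * v) := by rw [e1]
      _ = (v * ψ ⟨μ * ↑u * μ⁻¹, hconjmem u⟩) * v := by group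
      _ = (ψ ⟨μ * (μ * ↑u * μ⁻¹) * μ⁻¹, _⟩ * v) * v := by rw [e2]
      _ = ψ ⟨(μ * μ) * ↑u * (μ * μ)⁻¹, hc2mem u⟩ * (v * v) := by rw [e3]; group
  have hpsi2 : ∀ u : U', ψ ⟨μ * μ, hμ2⟩ * ψ u
      = ψ ⟨(μ * μ) * ↑u * (μ * μ)⁻¹, hc2mem u⟩ * ψ ⟨μ * μ, hμ2⟩ := by
    intro u
    rw [← map_mul, ← map_mul]
    apply congrArg
    apply Subtype.ext
    show (μ * μ) * ↑u = ((μ * μ) * ↑u * (μ * μ)⁻¹) * (μ * μ)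
    group
  refine ⟨(v * v)⁻¹ * ψ ⟨μ * μ, hμ2⟩, ?_, ?_, ?_⟩
  · rw [← hbig]
    intro u
    have hC : ψ ⟨(μ * μ) * ↑u * (μ * μ)⁻¹, hc2mem u⟩
        = ψ ⟨μ * μ, hμ2⟩ * ψ u * (ψ ⟨μ * μ, hμ2⟩)⁻¹ := by
      rw [hpsi2 u]; simp [mul_assoc]
    have hW : ψ ⟨(μ * μ) * ↑u * (μ * μ)⁻¹, hc2mem u⟩
        = (v * v) * ψ u * (v * v)⁻¹ := by
      rw [hcc u]; simp [mul_assoc]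
    have key : ψ ⟨μ * μ, hμ2⟩ * ψ u * (ψ ⟨μ * μ, hμ2⟩)⁻¹
        = (v * v) * ψ u * (v * v)⁻¹ := by rw [← hC, hW]
    calc ((v * v)⁻¹ * ψ ⟨μ * μ, hμ2⟩) * ψ u * ((v * v)⁻¹ * ψ ⟨μ * μ, hμ2⟩)⁻¹
        = (v * v)⁻¹ * (ψ ⟨μ * μ, hμ2⟩ * ψ u * (ψ ⟨μ * μ, hμ2⟩)⁻¹) * (v * v) := by
          simp [mul_assoc]
      _ = (v * v)⁻¹ * ((v * v) * ψ u * (v * v)⁻¹) * (v * v) := by rw [key]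
      _ = ψ u := by simp [mul_assoc]
  · intro h
    rw [← mul_assoc, mul_inv_cancel, one_mul]
  · intro zt hzt hsq Ψ hΨ1 hΨ2 x y
    have hztc : ∀ a : V, a * zt = zt * a := Subgroup.mem_center_iff.mp hzt
    have hcom : ∀ a b : V, a * (zt * b) = zt * (a * b) := by
      intro a b; rw [← mul_assoc, hztc a, mul_assoc]
    have ext : ∀ {p q r s : V}, p * q = r * s → ∀ t : V, p * (q * t) = r * (s * t) := by
      intro p q r s h t; rw [← mul_assoc, h, mul_assoc]
    have hz2 : v * v * (zt * zt) = ψ ⟨μ * μ, hμ2⟩ := by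
      rw [hsq, ← mul_assoc, mul_inv_cancel, one_mul]
    by_cases hx : x ∈ U' <;> by_cases hy : y ∈ U'
    · -- both in U'
      rw [show Ψ (x * y) = ψ ⟨x * y, mul_mem hx hy⟩ from hΨ1 ⟨x * y, mul_mem hx hy⟩,
        show Ψ x = ψ ⟨x, hx⟩ from hΨ1 ⟨x, hx⟩,
        show Ψ y = ψ ⟨y, hy⟩ from hΨ1 ⟨y, hy⟩, hψmul]
    · -- x ∈ U', y ∉ U'
      have hxy : x * y ∉ U' := by rw [hmem]; tauto
      have hm1 : μ⁻¹ * (x * y) ∈ U' := by rw [hmem]; exact iff_of_false hμinv hxy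
      have hm2 : μ⁻¹ * y ∈ U' := by rw [hmem]; exact iff_of_false hμinv hy
      have hm3 : μ⁻¹ * (x * μ) ∈ U' := by
        have h1 : μ⁻¹ * x ∉ U' := by rw [hmem]; tauto
        rw [← mul_assoc, hmem]; exact iff_of_false h1 hμ
      rw [hΨ2 (x * y) hxy hm1, show Ψ x = ψ ⟨x, hx⟩ from hΨ1 ⟨x, hx⟩, hΨ2 y hy hm2]
      have e1 : v * ψ ⟨μ⁻¹ * (x * μ), hm3⟩ = ψ ⟨x, hx⟩ * v := by
        rw [hconj ⟨μ⁻¹ * (x * μ), hm3⟩]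
        congr 1
        apply hψeq; group
      have e2 : ψ ⟨μ⁻¹ * (x * y), hm1⟩ = ψ ⟨μ⁻¹ * (x * μ), hm3⟩ * ψ ⟨μ⁻¹ * y, hm2⟩ := by
        rw [← hψmul]
        apply hψeq; group
      rw [e2]
      simp only [mul_assoc]
      simp only [hcom]
      rw [ext e1 (ψ ⟨μ⁻¹ * y, hm2⟩)]
    · -- x ∉ U', y ∈ U'
      have hxy : x * y ∉ U' := by rw [hmem]; tauto
      have hm1 : μ⁻¹ * (x * y) ∈ U' := by rw [hmem]; exact iff_of_false hμinv hxy
      have hm2 : μ⁻¹ * x ∈ U' := by rw [hmem]; exact iff_of_false hμinv hx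
      rw [hΨ2 (x * y) hxy hm1, hΨ2 x hx hm2, show Ψ y = ψ ⟨y, hy⟩ from hΨ1 ⟨y, hy⟩]
      have e2 : ψ ⟨μ⁻¹ * (x * y), hm1⟩ = ψ ⟨μ⁻¹ * x, hm2⟩ * ψ ⟨y, hy⟩ := by
        rw [← hψmul]
        apply hψeq; group
      rw [e2]; group
    · -- both ∉ U'
      have hxy : x * y ∈ U' := by rw [hmem]; tauto
      have ha : μ⁻¹ * x ∈ U' := by rw [hmem]; exact iff_of_false hμinv hx
      have hb : μ⁻¹ * y ∈ U' := by rw [hmem]; exact iff_of_false hμinv hy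
      have hc : x * μ⁻¹ ∈ U' := by rw [hmem]; exact iff_of_false hx hμinv
      rw [show Ψ (x * y) = ψ ⟨x * y, hxy⟩ from hΨ1 ⟨x * y, hxy⟩,
        hΨ2 x hx ha, hΨ2 y hy hb]
      have e1 : v * ψ ⟨μ⁻¹ * x, ha⟩ = ψ ⟨x * μ⁻¹, hc⟩ * v := by
        rw [hconj ⟨μ⁻¹ * x, ha⟩]
        congr 1
        apply hψeq; group
      have e3 : ψ ⟨x * μ⁻¹, hc⟩ * ψ ⟨μ * μ, hμ2⟩ * ψ ⟨μ⁻¹ * y, hb⟩ = ψ ⟨x * y, hxy⟩ := by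
        rw [← hψmul, ← hψmul]
        apply hψeq; group
      rw [← e3, ← hz2]
      simp only [mul_assoc]
      simp only [hcom]
      rw [ext e1 (v * ψ ⟨μ⁻¹ * y, hb⟩)]
end

section
/- Let F be a totally real field, E ⊆ F a subfield, Σ_F the real embeddings of F, and k : Σ_F → ℤ a weight. There exists t : Σ_F → ℝ such that k_σ + 2t_σ = R is independent of σ and such that for every real embedding τ of E, the sum Σ_{σ|τ} (t_σ − ½) is an integer, if and only if k is E-paritious, i.e. the parity of Σ_{σ|τ} k_σ is independent of τ. -/
open NumberField Finset

/-! Writing `t_σ = (R - k_σ)/2`, the sum over a fibre is `([F:E](R-1) - Σ_{σ∣τ} k_σ)/2`, so the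
condition asks for a single real `R` making all these numbers integers. Any two of them differ
by half the difference of the fibre sums, which forces equal parities; conversely, if all fibre
sums have the parity of `S = Σ_{σ∣τ₀} k_σ`, then `R = 1 + S/[F:E]` works. -/

theorem sum_sub_half_eq_of_add_two_mul_eq {α : Type*} (s : Finset α) (t : α → ℝ) (k : α → ℤ)
    (R : ℝ) (hR : ∀ σ, (k σ : ℝ) + 2 * t σ = R) :
    ∑ σ ∈ s, (t σ - 1 / 2) = (#s * (R - 1) - ((∑ σ ∈ s, k σ : ℤ) : ℝ)) / 2 := by
  have ht : ∀ σ ∈ s, t σ - 1 / 2 = ((R - 1) - k σ) / 2 := fun σ _ => by linarith [hR σ]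
  rw [sum_congr rfl ht, ← sum_div, sum_sub_distrib, sum_const, nsmul_eq_mul]
  push_cast
  rfl

theorem exists_half_sub_eq_int_iff_emod_two_eq {ι : Type*} {d : ℕ} (hd : d ≠ 0) (S : ι → ℤ) :
    (∃ R : ℝ, ∀ i, ∃ n : ℤ, (d * (R - 1) - S i) / 2 = n) ↔ ∀ i j, S i % 2 = S j % 2 := by
  constructor
  · rintro ⟨R, hR⟩ i j
    obtain ⟨m, hm⟩ := hR i
    obtain ⟨n, hn⟩ := hR j
    have hdiff : S i - S j = 2 * (n - m) := by
      have : (S i : ℝ) - S j = 2 * (n - m) := by linarith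
      exact_mod_cast this
    omega
  · intro hpar
    cases isEmpty_or_nonempty ι with
    | inl _ => exact ⟨0, isEmptyElim⟩
    | inr hι =>
      obtain ⟨i₀⟩ := hι
      refine ⟨1 + S i₀ / d, fun i => ?_⟩
      obtain ⟨m, hm⟩ := Int.ModEq.dvd (hpar i i₀)
      refine ⟨m, ?_⟩
      have hm' : (S i₀ : ℝ) - S i = 2 * m := by exact_mod_cast hm
      have hdR : (d : ℝ) * (1 + S i₀ / d - 1) = S i₀ := by field_simp; ring
      rw [hdR]
      linarith

theorem reasonable_t_iff_E_paritious_general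
    (E F : Type*) [Field E] [Field F] [NumberField E] [NumberField F] [Algebra E F]
    [Fintype (F →+* ℝ)] [DecidableEq (E →+* ℝ)]
    (hfib : ∀ τ : E →+* ℝ,
      (univ.filter fun σ : F →+* ℝ => σ.comp (algebraMap E F) = τ).card
        = Module.finrank E F)
    (k : (F →+* ℝ) → ℤ) :
    (∃ t : (F →+* ℝ) → ℝ, ∃ R : ℝ,
        (∀ σ, (k σ : ℝ) + 2 * t σ = R) ∧
        ∀ τ : E →+* ℝ, ∃ n : ℤ,
          (∑ σ ∈ univ.filter fun σ : F →+* ℝ => σ.comp (algebraMap E F) = τ,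
            (t σ - 1 / 2)) = (n : ℝ))
      ↔ ∀ τ τ' : E →+* ℝ,
          (∑ σ ∈ univ.filter fun σ : F →+* ℝ => σ.comp (algebraMap E F) = τ, k σ) % 2
            = (∑ σ ∈ univ.filter fun σ : F →+* ℝ => σ.comp (algebraMap E F) = τ', k σ) % 2 := by
  let fibre (τ : E →+* ℝ) := univ.filter fun σ : F →+* ℝ => σ.comp (algebraMap E F) = τ
  have hfibre_sum (t : (F →+* ℝ) → ℝ) (R : ℝ) (hR : ∀ σ, (k σ : ℝ) + 2 * t σ = R)
      (τ : E →+* ℝ) : ∑ σ ∈ fibre τ, (t σ - 1 / 2)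
        = (Module.finrank E F * (R - 1) - ((∑ σ ∈ fibre τ, k σ : ℤ) : ℝ)) / 2 := by
    rw [sum_sub_half_eq_of_add_two_mul_eq _ t k R hR, hfib]
  rw [← exists_half_sub_eq_int_iff_emod_two_eq (Module.finrank_pos (R := E) (M := F)).ne']
  constructor
  · rintro ⟨t, R, hR, hint⟩
    exact ⟨R, fun τ => hfibre_sum t R hR τ ▸ hint τ⟩
  · rintro ⟨R, hint⟩
    have hR : ∀ σ, (k σ : ℝ) + 2 * ((R - k σ) / 2) = R := fun σ => by ring
    exact ⟨_, R, hR, fun τ => (hfibre_sum _ R hR τ).symm ▸ hint τ⟩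

/-- For a totally real extension `F/E` and a weight `k : Σ_F → ℤ`:
there exists `t : Σ_F → ℝ` with `k_σ + 2t_σ = R` independent of `σ` and with
`Σ_{σ∣τ}(t_σ − ½) ∈ ℤ` for every real embedding `τ` of `E`, if and only if `k` is
`E`-paritious, i.e. the parity of `Σ_{σ∣τ} k_σ` is independent of `τ`.
(`σ ∣ τ` means the real embedding `σ` of `F` restricts to `τ` on `E`; each fibre has
exactly `[F : E]` elements.) -/
theorem reasonable_t_iff_E_paritious
    (E F : Type*) [Field E] [Field F] [NumberField E] [NumberField F] [Algebra E F]
    [Fintype (F →+* ℝ)] [DecidableEq (E →+* ℝ)]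
    (htotrealF : ∀ φ : F →+* ℂ, ComplexEmbedding.IsReal φ)
    (htotrealE : ∀ φ : E →+* ℂ, ComplexEmbedding.IsReal φ)
    (hfib : ∀ τ : E →+* ℝ,
      (univ.filter fun σ : F →+* ℝ => σ.comp (algebraMap E F) = τ).card
        = Module.finrank E F)
    (k : (F →+* ℝ) → ℤ) :
    (∃ t : (F →+* ℝ) → ℝ, ∃ R : ℝ,
        (∀ σ, (k σ : ℝ) + 2 * t σ = R) ∧
        ∀ τ : E →+* ℝ, ∃ n : ℤ,
          (∑ σ ∈ univ.filter fun σ : F →+* ℝ => σ.comp (algebraMap E F) = τ,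
            (t σ - 1 / 2)) = (n : ℝ))
      ↔ ∀ τ τ' : E →+* ℝ,
          (∑ σ ∈ univ.filter fun σ : F →+* ℝ => σ.comp (algebraMap E F) = τ, k σ) % 2
            = (∑ σ ∈ univ.filter fun σ : F →+* ℝ => σ.comp (algebraMap E F) = τ', k σ) % 2 :=
  reasonable_t_iff_E_paritious_general E F hfib k
end

section
/- Let F/E be an extension of number fields, O_F and O_E their rings of integers, and define the capitulation group K_{F/E} = (F^{×+} ∩ [Ô_F^× · 𝔸_{E,f}^×]) / E^{×+}. Then there is an exact sequence 0 → O_F^{×+}/O_E^{×+} → K_{F/E} → Cl⁺(E) → Cl⁺(F), where the map K_{F/E} → Cl⁺(E) sends the class of a ∈ F^{×+} to the narrow class of the ideal of O_E whose extension to O_F equals aO_F. -/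
open NumberField FractionalIdeal

section

/-- The subgroup of totally positive elements `X^{×+}` of (the unit group of) a
number field `X`. -/
def posUnits (X : Type*) [Field X] : Subgroup Xˣ where
  carrier := {x | ∀ σ : X →+* ℝ, 0 < σ (x : X)}
  one_mem' := by intro σ; simp
  mul_mem' := by
    intro a b ha hb σ
    rw [Units.val_mul, _root_.map_mul]
    exact mul_pos (ha σ) (hb σ)
  inv_mem' := by
    intro a ha σ
    rw [Units.val_inv_eq_inv_val, map_inv₀]
    exact inv_pos.mpr (ha σ)

variable (E F : Type*) [Field E] [Field F] [NumberField E] [NumberField F] [Algebra E F]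

/-- The image of `E^{×+}` in `Fˣ`. -/
def posEInF : Subgroup Fˣ :=
  Subgroup.map (Units.map (algebraMap E F).toMonoidHom) (posUnits E)

/-- The subgroup `Ô_F^×` of units of `F` integral at every finite place, i.e. the
image of `(𝓞 F)ˣ` in `Fˣ`. -/
def intUnits : Subgroup Fˣ :=
  (Units.map (algebraMap (𝓞 F) F).toMonoidHom).range

/-- The coercion of the inverse of an invertible fractional ideal equal to
`spanSingleton x` is `spanSingleton x⁻¹`. -/
theorem val_inv_of_spanSingleton {X : Type*} [Field X] [NumberField X]
    (J : (FractionalIdeal (nonZeroDivisors (𝓞 X)) X)ˣ) (x : Xˣ)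
    (h : (J : FractionalIdeal (nonZeroDivisors (𝓞 X)) X)
      = spanSingleton (nonZeroDivisors (𝓞 X)) (x : X)) :
    ((J⁻¹ : (FractionalIdeal (nonZeroDivisors (𝓞 X)) X)ˣ) :
        FractionalIdeal (nonZeroDivisors (𝓞 X)) X)
      = spanSingleton (nonZeroDivisors (𝓞 X)) (((x⁻¹ : Xˣ)) : X) := by
  have h1 : (J : FractionalIdeal (nonZeroDivisors (𝓞 X)) X) * ↑(J⁻¹) = 1 := by
    rw [← Units.val_mul, mul_inv_cancel, Units.val_one]
  have h2 : spanSingleton (nonZeroDivisors (𝓞 X)) (x : X)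
      * spanSingleton (nonZeroDivisors (𝓞 X)) ((x : X)⁻¹) = 1 := by
    rw [spanSingleton_mul_spanSingleton, mul_inv_cancel₀ (Units.ne_zero x),
      spanSingleton_one]
  have key : ((J⁻¹ : (FractionalIdeal (nonZeroDivisors (𝓞 X)) X)ˣ) :
      FractionalIdeal (nonZeroDivisors (𝓞 X)) X)
      = spanSingleton (nonZeroDivisors (𝓞 X)) ((x : X)⁻¹) := by
    calc (↑(J⁻¹) : FractionalIdeal (nonZeroDivisors (𝓞 X)) X)
        = 1 * ↑(J⁻¹) := (one_mul _).symm
      _ = (spanSingleton (nonZeroDivisors (𝓞 X)) (x : X)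
            * spanSingleton (nonZeroDivisors (𝓞 X)) ((x : X)⁻¹)) * ↑(J⁻¹) := by rw [h2]
      _ = spanSingleton (nonZeroDivisors (𝓞 X)) ((x : X)⁻¹)
            * ((J : FractionalIdeal (nonZeroDivisors (𝓞 X)) X) * ↑(J⁻¹)) := by
          rw [h]; ring
      _ = spanSingleton (nonZeroDivisors (𝓞 X)) ((x : X)⁻¹) := by rw [h1, mul_one]
  rw [key, Units.val_inv_eq_inv_val]

/-- The subgroup of principal fractional ideals generated by a totally positive
element; the narrow class group is the quotient by this subgroup. -/
def prinPlus (X : Type*) [Field X] [NumberField X] :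
    Subgroup (FractionalIdeal (nonZeroDivisors (𝓞 X)) X)ˣ where
  carrier := {J | ∃ x : Xˣ, x ∈ posUnits X ∧
    (J : FractionalIdeal (nonZeroDivisors (𝓞 X)) X)
      = spanSingleton (nonZeroDivisors (𝓞 X)) (x : X)}
  one_mem' := ⟨1, one_mem _, by rw [Units.val_one, Units.val_one, spanSingleton_one]⟩
  mul_mem' := by
    rintro a b ⟨x, hx, hxa⟩ ⟨y, hy, hyb⟩
    exact ⟨x * y, mul_mem hx hy, by
      rw [Units.val_mul, hxa, hyb, spanSingleton_mul_spanSingleton, Units.val_mul]⟩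
  inv_mem' := by
    rintro a ⟨x, hx, hxa⟩
    exact ⟨x⁻¹, inv_mem hx, val_inv_of_spanSingleton a x hxa⟩

/-- The narrow class group `Cl⁺(X)`: fractional ideals modulo totally positive
principal ideals. -/
def narrowClassGroup (X : Type*) [Field X] [NumberField X] :=
  (FractionalIdeal (nonZeroDivisors (𝓞 X)) X)ˣ ⧸ prinPlus X

instance (X : Type*) [Field X] [NumberField X] : CommGroup (narrowClassGroup X) :=
  QuotientGroup.Quotient.commGroup _

/-- The "capitulation numerator" `F^{×+} ∩ [Ô_F^× · 𝔸_{E,f}^×]`: totally positive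
elements of `F` whose principal fractional ideal is the extension of a fractional
ideal of `E`.  Here `ext` is the extension-of-fractional-ideals homomorphism. -/
def capNumerator (ext : (FractionalIdeal (nonZeroDivisors (𝓞 E)) E)ˣ →*
    (FractionalIdeal (nonZeroDivisors (𝓞 F)) F)ˣ) : Subgroup Fˣ where
  carrier := {x | x ∈ posUnits F ∧ ∃ I : (FractionalIdeal (nonZeroDivisors (𝓞 E)) E)ˣ,
    ((ext I : (FractionalIdeal (nonZeroDivisors (𝓞 F)) F)ˣ) :
        FractionalIdeal (nonZeroDivisors (𝓞 F)) F)
      = spanSingleton (nonZeroDivisors (𝓞 F)) (x : F)}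
  one_mem' := ⟨one_mem _, 1, by rw [_root_.map_one, Units.val_one, Units.val_one,
    spanSingleton_one]⟩
  mul_mem' := by
    rintro a b ⟨ha, I, hI⟩ ⟨hb, J, hJ⟩
    exact ⟨mul_mem ha hb, I * J, by
      rw [_root_.map_mul, Units.val_mul, hI, hJ, spanSingleton_mul_spanSingleton,
        Units.val_mul]⟩
  inv_mem' := by
    rintro a ⟨ha, I, hI⟩
    exact ⟨inv_mem ha, I⁻¹, by
      rw [_root_.map_inv]
      exact val_inv_of_spanSingleton (ext I) a hI⟩

/-! The sequence is exact for formal reasons everywhere except at `K_{F/E}`. There, suppose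
`a ∈ F^{×+}` with `aO_F = I O_F` and `I = eO_E` for some totally positive `e ∈ E`. Then
`aO_F = eO_F`, so `a = ue` for a unit `u` of `O_F`, and `u = a/e` is totally positive. Hence the
class of `a` comes from `O_F^{×+}`. -/

open scoped nonZeroDivisors

theorem posEInF_le_posUnits {K L : Type*} [Field K] [Field L] [Algebra K L] :
    posEInF K L ≤ posUnits L := by
  rintro _ ⟨e, he, rfl⟩ σ
  simpa using he (σ.comp (algebraMap K L))

/-- `O_L^{×+}/O_K^{×+}`, with `O_K^{×+}` realised as `K^{×+} ∩ O_L^{×+}` inside `Lˣ`. -/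
abbrev TotallyPositiveUnitsQuotient (K L : Type*) [Field K] [Field L] [Algebra K L] : Type _ :=
  (posUnits L ⊓ intUnits L : Subgroup Lˣ) ⧸
    ((posEInF K L ⊓ (posUnits L ⊓ intUnits L)).subgroupOf (posUnits L ⊓ intUnits L))

abbrev CapitulationGroup (K L : Type*) [Field K] [Field L] [NumberField K] [NumberField L]
    [Algebra K L] (ext : (FractionalIdeal (𝓞 K)⁰ K)ˣ →* (FractionalIdeal (𝓞 L)⁰ L)ˣ) :
    Type _ :=
  (capNumerator K L ext : Subgroup Lˣ) ⧸
    ((posEInF K L ⊓ capNumerator K L ext).subgroupOf (capNumerator K L ext))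

section

variable {K L : Type*} [Field K] [Field L] [NumberField K] [NumberField L]

theorem spanSingleton_eq_one_of_mem_intUnits {x : Lˣ} (hx : x ∈ intUnits L) :
    spanSingleton (𝓞 L)⁰ (x : L) = 1 := by
  obtain ⟨u, rfl⟩ := hx
  rw [← spanSingleton_one, spanSingleton_eq_spanSingleton]
  exact ⟨u⁻¹, by simp [Units.smul_def, Algebra.smul_def]⟩

theorem exists_mem_intUnits_mul_eq_of_spanSingleton_eq {x y : Lˣ}
    (h : spanSingleton (𝓞 L)⁰ (x : L) = spanSingleton (𝓞 L)⁰ (y : L)) :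
    ∃ u ∈ intUnits L, u * x = y := by
  obtain ⟨z, hz⟩ := spanSingleton_eq_spanSingleton.1 h
  refine ⟨Units.map (algebraMap (𝓞 L) L).toMonoidHom z, ⟨z, rfl⟩, Units.ext ?_⟩
  simpa [Units.smul_def, Algebra.smul_def] using hz

theorem inf_intUnits_le_capNumerator
    (ext : (FractionalIdeal (𝓞 K)⁰ K)ˣ →* (FractionalIdeal (𝓞 L)⁰ L)ˣ) :
    posUnits L ⊓ intUnits L ≤ capNumerator K L ext := fun x hx =>
  ⟨hx.1, 1, by rw [_root_.map_one, Units.val_one, spanSingleton_eq_one_of_mem_intUnits hx.2]⟩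

variable [Algebra K L]

theorem extended_spanSingleton_algebraMap
    (hf : (𝓞 K)⁰ ≤ Submonoid.comap (algebraMap (𝓞 K) (𝓞 L)) (𝓞 L)⁰) (a : K) :
    extended L hf (spanSingleton (𝓞 K)⁰ a) = spanSingleton (𝓞 L)⁰ (algebraMap K L a) := by
  rw [extended_spanSingleton, IsLocalization.map_unique _ (algebraMap K L) fun b => by
    simp only [← IsScalarTower.algebraMap_apply]]

theorem mem_inf_intUnits_sup_posEInF
    (hf : (𝓞 K)⁰ ≤ Submonoid.comap (algebraMap (𝓞 K) (𝓞 L)) (𝓞 L)⁰) {x : Lˣ}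
    (hx : x ∈ posUnits L) {I : (FractionalIdeal (𝓞 K)⁰ K)ˣ} (hI : I ∈ prinPlus K)
    (hIx : extended L hf (I : FractionalIdeal (𝓞 K)⁰ K) = spanSingleton (𝓞 L)⁰ (x : L)) :
    x ∈ posUnits L ⊓ intUnits L ⊔ posEInF K L := by
  obtain ⟨e, he, hIe⟩ := hI
  set m : Lˣ := Units.map (algebraMap K L).toMonoidHom e
  have hm : m ∈ posEInF K L := ⟨e, he, rfl⟩
  have hspan : spanSingleton (𝓞 L)⁰ (m : L) = spanSingleton (𝓞 L)⁰ (x : L) := by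
    rw [← hIx, hIe, extended_spanSingleton_algebraMap]
    rfl
  obtain ⟨u, hu, rfl⟩ := exists_mem_intUnits_mul_eq_of_spanSingleton_eq hspan
  have hu_pos : u ∈ posUnits L := by
    simpa using mul_mem hx (inv_mem (posEInF_le_posUnits hm))
  exact Subgroup.mem_sup.2 ⟨u, ⟨hu_pos, hu⟩, m, hm, rfl⟩

variable {ext : (FractionalIdeal (𝓞 K)⁰ K)ˣ →* (FractionalIdeal (𝓞 L)⁰ L)ˣ}

theorem TotallyPositiveUnitsQuotient.injective
    (f₁ : TotallyPositiveUnitsQuotient K L →* CapitulationGroup K L ext)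
    (hf₁ : ∀ (x : Lˣ) (hx : x ∈ posUnits L ⊓ intUnits L) (hx' : x ∈ capNumerator K L ext),
      f₁ (QuotientGroup.mk ⟨x, hx⟩) = QuotientGroup.mk ⟨x, hx'⟩) :
    Function.Injective f₁ := by
  refine (injective_iff_map_eq_one f₁).2 fun q hq => ?_
  obtain ⟨⟨x, hx⟩, rfl⟩ := QuotientGroup.mk_surjective q
  rw [hf₁ x hx (inf_intUnits_le_capNumerator ext hx), QuotientGroup.eq_one_iff,
    Subgroup.mem_subgroupOf] at hq
  exact (QuotientGroup.eq_one_iff _).2 ⟨hq.1, hx⟩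

theorem CapitulationGroup.exact
    (hf : (𝓞 K)⁰ ≤ Submonoid.comap (algebraMap (𝓞 K) (𝓞 L)) (𝓞 L)⁰)
    (hext : ∀ I : (FractionalIdeal (𝓞 K)⁰ K)ˣ,
      (ext I : FractionalIdeal (𝓞 L)⁰ L) = extended L hf (I : FractionalIdeal (𝓞 K)⁰ K))
    (f₁ : TotallyPositiveUnitsQuotient K L →* CapitulationGroup K L ext)
    (hf₁ : ∀ (x : Lˣ) (hx : x ∈ posUnits L ⊓ intUnits L) (hx' : x ∈ capNumerator K L ext),
      f₁ (QuotientGroup.mk ⟨x, hx⟩) = QuotientGroup.mk ⟨x, hx'⟩)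
    (f₂ : CapitulationGroup K L ext →* narrowClassGroup K)
    (hf₂ : ∀ (x : Lˣ) (hx : x ∈ capNumerator K L ext) (I : (FractionalIdeal (𝓞 K)⁰ K)ˣ),
      (ext I : FractionalIdeal (𝓞 L)⁰ L) = spanSingleton (𝓞 L)⁰ (x : L) →
      f₂ (QuotientGroup.mk ⟨x, hx⟩) = QuotientGroup.mk I) (y : CapitulationGroup K L ext) :
    y ∈ f₂.ker ↔ y ∈ f₁.range := by
  constructor
  · intro hy
    obtain ⟨⟨x, hx⟩, rfl⟩ := QuotientGroup.mk_surjective y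
    obtain ⟨hpos, I, hI⟩ := id hx
    rw [MonoidHom.mem_ker, hf₂ x hx I hI] at hy
    have hIp := (QuotientGroup.eq_one_iff (N := prinPlus K) I).1 hy
    obtain ⟨w, hw, m, hm, rfl⟩ :=
      Subgroup.mem_sup.1 (mem_inf_intUnits_sup_posEInF hf hpos hIp (by rw [← hext, hI]))
    refine ⟨QuotientGroup.mk ⟨w, hw⟩, ?_⟩
    rw [hf₁ w hw (inf_intUnits_le_capNumerator ext hw), QuotientGroup.eq,
      Subgroup.mem_subgroupOf]
    exact ⟨by simpa using hm, Subtype.property _⟩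
  · rintro ⟨q, rfl⟩
    obtain ⟨⟨x, hx⟩, rfl⟩ := QuotientGroup.mk_surjective q
    have hx' := inf_intUnits_le_capNumerator ext hx
    rw [MonoidHom.mem_ker, hf₁ x hx hx', hf₂ x hx' 1
      (by rw [_root_.map_one, Units.val_one, spanSingleton_eq_one_of_mem_intUnits hx.2])]
    rfl

theorem narrowClassGroup.exact
    (f₂ : CapitulationGroup K L ext →* narrowClassGroup K)
    (hf₂ : ∀ (x : Lˣ) (hx : x ∈ capNumerator K L ext) (I : (FractionalIdeal (𝓞 K)⁰ K)ˣ),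
      (ext I : FractionalIdeal (𝓞 L)⁰ L) = spanSingleton (𝓞 L)⁰ (x : L) →
      f₂ (QuotientGroup.mk ⟨x, hx⟩) = QuotientGroup.mk I)
    (f₃ : narrowClassGroup K →* narrowClassGroup L)
    (hf₃ : ∀ I : (FractionalIdeal (𝓞 K)⁰ K)ˣ,
      f₃ (QuotientGroup.mk I) = QuotientGroup.mk (ext I)) (z : narrowClassGroup K) :
    z ∈ f₃.ker ↔ z ∈ f₂.range := by
  constructor
  · intro hz
    obtain ⟨I, rfl⟩ := QuotientGroup.mk_surjective z
    obtain ⟨x, hpos, hI⟩ := (QuotientGroup.eq_one_iff (N := prinPlus L) (ext I)).1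
      ((hf₃ I).symm.trans hz)
    exact ⟨QuotientGroup.mk ⟨x, hpos, I, hI⟩, hf₂ x _ I hI⟩
  · rintro ⟨q, rfl⟩
    obtain ⟨⟨x, hx⟩, rfl⟩ := QuotientGroup.mk_surjective q
    obtain ⟨hpos, I, hI⟩ := id hx
    rw [MonoidHom.mem_ker, hf₂ x hx I hI, hf₃]
    exact (QuotientGroup.eq_one_iff (N := prinPlus L) (ext I)).2 ⟨x, hpos, hI⟩

end

theorem capitulation_exact_sequence
    (hf : nonZeroDivisors (𝓞 E) ≤
      Submonoid.comap (algebraMap (𝓞 E) (𝓞 F)) (nonZeroDivisors (𝓞 F)))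
    -- extension of (invertible) fractional ideals along `𝓞 E → 𝓞 F`:
    (ext : (FractionalIdeal (nonZeroDivisors (𝓞 E)) E)ˣ →*
      (FractionalIdeal (nonZeroDivisors (𝓞 F)) F)ˣ)
    (hextdef : ∀ I : (FractionalIdeal (nonZeroDivisors (𝓞 E)) E)ˣ,
      ((ext I : (FractionalIdeal (nonZeroDivisors (𝓞 F)) F)ˣ) :
          FractionalIdeal (nonZeroDivisors (𝓞 F)) F)
        = FractionalIdeal.extended F hf (I : FractionalIdeal (nonZeroDivisors (𝓞 E)) E))
    -- the three maps of the sequence, specified by their defining properties: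
    (f₁ : ((posUnits F ⊓ intUnits F : Subgroup Fˣ) ⧸
        ((posEInF E F ⊓ (posUnits F ⊓ intUnits F)).subgroupOf
          (posUnits F ⊓ intUnits F : Subgroup Fˣ))) →*
      ((capNumerator E F ext : Subgroup Fˣ) ⧸
        ((posEInF E F ⊓ capNumerator E F ext).subgroupOf (capNumerator E F ext))))
    (hf₁ : ∀ (x : Fˣ) (hx : x ∈ posUnits F ⊓ intUnits F) (hx' : x ∈ capNumerator E F ext),
      f₁ (QuotientGroup.mk ⟨x, hx⟩) = QuotientGroup.mk ⟨x, hx'⟩)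
    (f₂ : ((capNumerator E F ext : Subgroup Fˣ) ⧸
        ((posEInF E F ⊓ capNumerator E F ext).subgroupOf (capNumerator E F ext))) →*
      narrowClassGroup E)
    (hf₂ : ∀ (x : Fˣ) (hx : x ∈ capNumerator E F ext)
        (I : (FractionalIdeal (nonZeroDivisors (𝓞 E)) E)ˣ),
      ((ext I : (FractionalIdeal (nonZeroDivisors (𝓞 F)) F)ˣ) :
          FractionalIdeal (nonZeroDivisors (𝓞 F)) F)
        = spanSingleton (nonZeroDivisors (𝓞 F)) (x : F) →
      f₂ (QuotientGroup.mk ⟨x, hx⟩) = QuotientGroup.mk I)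
    (f₃ : narrowClassGroup E →* narrowClassGroup F)
    (hf₃ : ∀ I : (FractionalIdeal (nonZeroDivisors (𝓞 E)) E)ˣ,
      f₃ (QuotientGroup.mk I) = QuotientGroup.mk (ext I)) :
    Function.Injective f₁ ∧
    (∀ y, y ∈ MonoidHom.ker f₂ ↔ y ∈ MonoidHom.range f₁) ∧
    (∀ z, z ∈ MonoidHom.ker f₃ ↔ z ∈ MonoidHom.range f₂) :=
  ⟨TotallyPositiveUnitsQuotient.injective f₁ hf₁,
    CapitulationGroup.exact hf hextdef f₁ hf₁ f₂ hf₂,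
    narrowClassGroup.exact f₂ hf₂ f₃ hf₃⟩

end
end
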